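/- Let J satisfy (J) and define κ(x) := (1/2) ∫_{−δ}^{δ} J(y)(|x−y| − |x|) dy. Then for every continuous function φ : ℝ → ℝ, the convolution κ*φ is twice continuously differentiable on ℝ and (κ*φ)″(x) = (J*φ)(x) − φ(x) for all x ∈ ℝ. -/

import Mathlib

open MeasureTheory Filter Real Set

/-- `κ(x) = (1/2) ∫_{−δ}^{δ} J(y)(|x−y| − |x|) dy`. -/
noncomputable def kappa (J : ℝ → ℝ) (δ : ℝ) : ℝ → ℝ :=
  fun x => (1 / 2) * ∫ y in Set.Icc (-δ) δ, J y * (|x - y| - |x|)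

/-- Convolution `(K*φ)(x) = ∫ K(y) φ(x−y) dy`. -/
noncomputable def convol (K φ : ℝ → ℝ) : ℝ → ℝ := fun x => ∫ y, K y * φ (x - y)

/-!
Let `P₂` be a second primitive of `φ`. By Fubini, `(κ * φ)(x)` is the integral against `J(z) / 2`
of `∫_{-δ}^{δ} (|y - z| - |y|) φ(x - y) dy`; writing `|u| = u + 2 max(-u, 0)` this inner integral
is `2 (P₂(x - z) - P₂(x))` plus a multiple of `z`. The multiple of `z` integrates to zero against
the even `J`, and `∫ J = 1`, so `κ * φ = J * P₂ - P₂`. Each derivative of `J * P₂` can be moved from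
`J` onto `P₂` by parts, hence `(κ * φ)'' = J * φ - φ`.
-/

noncomputable def primitive (f : ℝ → ℝ) (x : ℝ) : ℝ := ∫ t in (0 : ℝ)..x, f t

section Primitive

variable {f : ℝ → ℝ}

theorem hasDerivAt_primitive (hf : Continuous f) (x : ℝ) : HasDerivAt (primitive f) (f x) x :=
  intervalIntegral.integral_hasDerivAt_right (hf.intervalIntegrable _ _)
    hf.aestronglyMeasurable.stronglyMeasurableAtFilter hf.continuousAt

theorem continuous_primitive (hf : Continuous f) : Continuous (primitive f) :=
  continuous_iff_continuousAt.2 fun x => (hasDerivAt_primitive hf x).continuousAt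

theorem integral_comp_sub_eq_primitive (hf : Continuous f) (x a b : ℝ) :
    ∫ y in a..b, f (x - y) = primitive f (x - a) - primitive f (x - b) := by
  rw [intervalIntegral.integral_comp_sub_left, primitive, primitive,
    intervalIntegral.integral_interval_sub_left (hf.intervalIntegrable _ _)
      (hf.intervalIntegrable _ _)]

theorem integral_sub_mul_comp_sub (hf : Continuous f) (x a z : ℝ) :
    ∫ y in a..z, (z - y) * f (x - y) = primitive (primitive f) (x - z)
      - primitive (primitive f) (x - a) + (z - a) * primitive f (x - a) := by
  have hF : ∀ y, HasDerivAt
      (fun y => (y - z) * primitive f (x - y) + primitive (primitive f) (x - y))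
      ((z - y) * f (x - y)) y := by
    intro y
    have h1 := (hasDerivAt_primitive hf (x - y)).comp_const_sub x y
    have h2 := (hasDerivAt_primitive (continuous_primitive hf) (x - y)).comp_const_sub x y
    refine ((((hasDerivAt_id y).sub_const z).fun_mul h1).fun_add h2).congr_deriv ?_
    simp only [id]
    ring
  rw [intervalIntegral.integral_eq_sub_of_hasDerivAt (fun y _ => hF y)
    (by apply Continuous.intervalIntegrable; fun_prop)]
  simp only [sub_self, zero_mul, zero_add]
  ring

end Primitive

theorem integral_max_sub_mul {f : ℝ → ℝ} {a b z : ℝ} (hz : z ∈ Icc a b)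
    (hf : IntervalIntegrable f volume a b) :
    ∫ y in a..b, max (z - y) 0 * f y = ∫ y in a..z, (z - y) * f y := by
  have hint : IntervalIntegrable (fun y => max (z - y) 0 * f y) volume a b :=
    hf.continuousOn_mul (by fun_prop)
  rw [← intervalIntegral.integral_add_adjacent_intervals (hint.mono_set (uIcc_subset_uIcc
      left_mem_uIcc (mem_uIcc_of_le hz.1 hz.2))) (hint.mono_set (uIcc_subset_uIcc
      (mem_uIcc_of_le hz.1 hz.2) right_mem_uIcc))]
  have h_left : ∫ y in a..z, max (z - y) 0 * f y = ∫ y in a..z, (z - y) * f y :=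
    intervalIntegral.integral_congr fun y hy => by
      rw [uIcc_of_le hz.1] at hy
      simp only [max_eq_left (sub_nonneg.2 hy.2)]
  have h_right : ∫ y in z..b, max (z - y) 0 * f y = 0 := by
    refine (intervalIntegral.integral_congr (g := fun _ => 0) fun y hy => ?_).trans
      intervalIntegral.integral_zero
    rw [uIcc_of_le hz.2] at hy
    simp only [max_eq_right (sub_nonpos.2 hy.1), zero_mul]
  rw [h_left, h_right, add_zero]

theorem abs_sub_sub_abs (y z : ℝ) : |y - z| - |y| = 2 * (max (z - y) 0 - max (0 - y) 0) - z := by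
  simp only [abs_eq_max_neg]
  grind

theorem integral_abs_sub_sub_abs_mul {φ : ℝ → ℝ} (hφ : Continuous φ) {δ z : ℝ}
    (hz : z ∈ Icc (-δ) δ) (x : ℝ) :
    ∫ y in -δ..δ, (|y - z| - |y|) * φ (x - y) = 2 * (primitive (primitive φ) (x - z)
      - primitive (primitive φ) x) + z * (primitive φ (x - δ) + primitive φ (x + δ)) := by
  have h0 : (0 : ℝ) ∈ Icc (-δ) δ := ⟨by linarith [hz.1, hz.2], by linarith [hz.1, hz.2]⟩
  have hint : ∀ g : ℝ → ℝ, Continuous g → IntervalIntegrable g volume (-δ) δ :=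
    fun g hg => hg.intervalIntegrable _ _
  have hφx : Continuous fun y => φ (x - y) := by fun_prop
  simp_rw [abs_sub_sub_abs, sub_mul, mul_assoc, sub_mul]
  rw [intervalIntegral.integral_sub (hint _ (by fun_prop)) (hint _ (by fun_prop)),
    intervalIntegral.integral_const_mul, intervalIntegral.integral_const_mul,
    intervalIntegral.integral_sub (hint _ (by fun_prop)) (hint _ (by fun_prop)),
    integral_max_sub_mul hz (hint _ hφx), integral_max_sub_mul h0 (hint _ hφx),
    integral_sub_mul_comp_sub hφ, integral_sub_mul_comp_sub hφ, integral_comp_sub_eq_primitive hφ]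
  simp only [sub_neg_eq_add, sub_zero]
  ring

theorem integral_eq_intervalIntegral_of_forall_notMem_eq_zero {f : ℝ → ℝ} {a b : ℝ} (hab : a ≤ b)
    (hf : ∀ y ∉ Icc a b, f y = 0) : ∫ y, f y = ∫ y in a..b, f y := by
  rw [intervalIntegral.integral_of_le hab, ← integral_Icc_eq_integral_Ioc,
    setIntegral_eq_integral_of_forall_compl_eq_zero hf]

section Kernel

variable {J : ℝ → ℝ} {δ : ℝ}

theorem intervalIntegral_id_mul_eq_zero_of_even (hJeven : ∀ x, J (-x) = J x) (a : ℝ) :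
    ∫ z in -a..a, z * J z = 0 := by
  have h := intervalIntegral.integral_comp_neg (a := -a) (b := a) fun z => z * J z
  simp only [hJeven, neg_mul, intervalIntegral.integral_neg, neg_neg] at h
  linarith

theorem kappa_eq_intervalIntegral (hδ : 0 ≤ δ) (x : ℝ) :
    kappa J δ x = (1 / 2) * ∫ z in -δ..δ, J z * (|x - z| - |x|) := by
  rw [kappa, intervalIntegral.integral_of_le (by linarith), integral_Icc_eq_integral_Ioc]

theorem kappa_eq_zero_of_notMem (hδ : 0 ≤ δ) (hJeven : ∀ x, J (-x) = J x) {x : ℝ}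
    (hx : x ∉ Icc (-δ) δ) : kappa J δ x = 0 := by
  rw [kappa_eq_intervalIntegral hδ]
  rcases not_and_or.1 hx with hx | hx <;> push Not at hx
  · rw [intervalIntegral.integral_congr (g := fun z => z * J z) fun z hz => ?_,
      intervalIntegral_id_mul_eq_zero_of_even hJeven, mul_zero]
    rw [uIcc_of_le (by linarith)] at hz
    simp only [abs_of_neg (by linarith : x < 0), abs_of_nonpos (by linarith [hz.1] : x - z ≤ 0)]
    ring
  · rw [intervalIntegral.integral_congr (g := fun z => -(z * J z)) fun z hz => ?_,
      intervalIntegral.integral_neg, intervalIntegral_id_mul_eq_zero_of_even hJeven]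
    · simp
    rw [uIcc_of_le (by linarith)] at hz
    simp only [abs_of_pos (by linarith : 0 < x), abs_of_nonneg (by linarith [hz.2] : 0 ≤ x - z)]
    ring

theorem convol_kappa_eq (hδ : 0 ≤ δ) (hJcont : Continuous J) (hJeven : ∀ x, J (-x) = J x)
    (hJ0 : ∀ y ∉ Icc (-δ) δ, J y = 0) (hJint : ∫ y, J y = 1) {φ : ℝ → ℝ} (hφ : Continuous φ)
    (x : ℝ) :
    convol (kappa J δ) φ x = convol J (primitive (primitive φ)) x
      - primitive (primitive φ) x := by
  set P₁ := primitive φ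
  set P₂ := primitive P₁
  set c := P₁ (x - δ) + P₁ (x + δ)
  have hδ' : -δ ≤ δ := by linarith
  have hF : Continuous fun p : ℝ × ℝ => J p.2 / 2 * ((|p.1 - p.2| - |p.1|) * φ (x - p.1)) := by
    fun_prop
  calc convol (kappa J δ) φ x = ∫ y in -δ..δ, kappa J δ y * φ (x - y) :=
        integral_eq_intervalIntegral_of_forall_notMem_eq_zero hδ' fun y hy => by
          rw [kappa_eq_zero_of_notMem hδ hJeven hy, zero_mul]
    _ = ∫ y in -δ..δ, ∫ z in -δ..δ, J z / 2 * ((|y - z| - |y|) * φ (x - y)) := by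
        refine intervalIntegral.integral_congr fun y _ => ?_
        simp only [kappa_eq_intervalIntegral hδ, ← intervalIntegral.integral_mul_const,
          ← intervalIntegral.integral_const_mul]
        congr with z
        ring
    _ = ∫ z in -δ..δ, ∫ y in -δ..δ, J z / 2 * ((|y - z| - |y|) * φ (x - y)) :=
        intervalIntegral_intervalIntegral_swap <|
          (hF.continuousOn.integrableOn_compact (isCompact_uIcc.prod isCompact_uIcc)).mono_set
            (prod_mono uIoc_subset_uIcc uIoc_subset_uIcc)
    _ = ∫ z in -δ..δ, (J z * P₂ (x - z) - P₂ x * J z + c / 2 * (z * J z)) := by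
        refine intervalIntegral.integral_congr fun z hz => ?_
        rw [uIcc_of_le hδ'] at hz
        simp only [intervalIntegral.integral_const_mul, integral_abs_sub_sub_abs_mul hφ hz]
        ring
    _ = convol J P₂ x - P₂ x := by
        have hP₂ : Continuous P₂ := continuous_primitive (continuous_primitive hφ)
        have hint : ∀ g : ℝ → ℝ, Continuous g → IntervalIntegrable g volume (-δ) δ :=
          fun g hg => hg.intervalIntegrable _ _
        rw [intervalIntegral.integral_add (hint _ (by fun_prop)) (hint _ (by fun_prop)),
          intervalIntegral.integral_sub (hint _ (by fun_prop)) (hint _ (by fun_prop)),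
          intervalIntegral.integral_const_mul, intervalIntegral.integral_const_mul,
          intervalIntegral_id_mul_eq_zero_of_even hJeven, convol,
          integral_eq_intervalIntegral_of_forall_notMem_eq_zero hδ' fun z hz => by
            rw [hJ0 z hz, zero_mul],
          ← integral_eq_intervalIntegral_of_forall_notMem_eq_zero hδ' hJ0, hJint]
        ring

end Kernel

open scoped Convolution

theorem convol_eq_convolution (K f : ℝ → ℝ) :
    convol K f = K ⋆[ContinuousLinearMap.mul ℝ ℝ] f := by
  ext x
  simp [convol, convolution_def]

section Convolution

variable {J G G' : ℝ → ℝ}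

theorem continuous_convol (hJ : Continuous J) (hJc : HasCompactSupport J) (hG : Continuous G) :
    Continuous (convol J G) := by
  rw [convol_eq_convolution]
  exact hJc.continuous_convolution_left _ hJ hG.locallyIntegrable

theorem convol_deriv_eq_convol (hJ : ContDiff ℝ 1 J) (hJc : HasCompactSupport J)
    (hG : ∀ t, HasDerivAt G (G' t) t) (hG' : Continuous G') (x : ℝ) :
    convol (deriv J) G x = convol J G' x := by
  have hGc : Continuous G := continuous_iff_continuousAt.2 fun t => (hG t).continuousAt
  have ibp := integral_mul_deriv_eq_deriv_mul_of_integrable (u := J) (u' := deriv J)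
    (v := fun y => G (x - y)) (v' := fun y => -G' (x - y))
    (fun y _ => (hJ.differentiable one_ne_zero y).hasDerivAt)
    (fun y _ => (hG (x - y)).comp_const_sub x y)
    ((hJ.continuous.mul (by fun_prop)).integrable_of_hasCompactSupport hJc.mul_right)
    (((hJ.continuous_deriv le_rfl).mul (by fun_prop)).integrable_of_hasCompactSupport
      hJc.deriv.mul_right)
    ((hJ.continuous.mul (by fun_prop)).integrable_of_hasCompactSupport hJc.mul_right)
  simp only [mul_neg, integral_neg, neg_inj] at ibp
  exact ibp.symm

theorem hasDerivAt_convol (hJ : ContDiff ℝ 1 J) (hJc : HasCompactSupport J)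
    (hG : ∀ t, HasDerivAt G (G' t) t) (hG' : Continuous G') (x : ℝ) :
    HasDerivAt (convol J G) (convol J G' x) x := by
  have hGc : Continuous G := continuous_iff_continuousAt.2 fun t => (hG t).continuousAt
  rw [← convol_deriv_eq_convol hJ hJc hG hG', convol_eq_convolution, convol_eq_convolution]
  exact hJc.hasDerivAt_convolution_left _ hJ hGc.locallyIntegrable x

end Convolution

theorem contDiff_two_and_deriv_deriv_eq {f f' f'' : ℝ → ℝ} (hf : ∀ x, HasDerivAt f (f' x) x)
    (hf' : ∀ x, HasDerivAt f' (f'' x) x) (hf'' : Continuous f'') :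
    ContDiff ℝ 2 f ∧ deriv (deriv f) = f'' := by
  have hd : deriv f = f' := funext fun x => (hf x).deriv
  have hd' : deriv f' = f'' := funext fun x => (hf' x).deriv
  refine ⟨?_, by rw [hd, hd']⟩
  rw [show (2 : WithTop ℕ∞) = 1 + 1 from rfl, contDiff_succ_iff_deriv, hd, contDiff_one_iff_deriv,
    hd']
  exact ⟨fun x => (hf x).differentiableAt, by simp, fun x => (hf' x).differentiableAt, hf''⟩

theorem stmt16_general (J : ℝ → ℝ) (δ : ℝ) (hδ : 0 < δ)
    (hJC1 : ContDiff ℝ 1 J)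
    (hJeven : ∀ x, J (-x) = J x)
    (hJsupp : tsupport J = Set.Icc (-δ) δ) (hJint : (∫ y, J y) = 1) :
    ∀ φ : ℝ → ℝ, Continuous φ →
      ContDiff ℝ 2 (convol (kappa J δ) φ) ∧
      ∀ x : ℝ, deriv (deriv (convol (kappa J δ) φ)) x = convol J φ x - φ x := by
  intro φ hφ
  have hJ0 : ∀ y ∉ Icc (-δ) δ, J y = 0 := fun y hy =>
    image_eq_zero_of_notMem_tsupport (hJsupp ▸ hy)
  have hJc : HasCompactSupport J := by rw [HasCompactSupport, hJsupp]; exact isCompact_Icc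
  have hP₁ := hasDerivAt_primitive hφ
  have hP₂ := hasDerivAt_primitive (continuous_primitive hφ)
  obtain ⟨hC2, hdd⟩ := contDiff_two_and_deriv_deriv_eq
    (fun x => (hasDerivAt_convol hJC1 hJc hP₂ (continuous_primitive hφ) x).fun_sub (hP₂ x))
    (fun x => (hasDerivAt_convol hJC1 hJc hP₁ hφ x).fun_sub (hP₁ x))
    ((continuous_convol hJC1.continuous hJc hφ).sub hφ)
  rw [funext (convol_kappa_eq hδ.le hJC1.continuous hJeven hJ0 hJint hφ)]
  exact ⟨hC2, congrFun hdd⟩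

/-- for every continuous `φ`, the convolution `κ*φ` is `C²` and
`(κ*φ)″ = J*φ − φ` on `ℝ`. -/
theorem stmt16 (J : ℝ → ℝ) (δ : ℝ) (hδ : 0 < δ)
    (hJC1 : ContDiff ℝ 1 J) (hJnonneg : ∀ x, 0 ≤ J x)
    (hJeven : ∀ x, J (-x) = J x) (hJanti : AntitoneOn J (Set.Ici 0))
    (hJsupp : tsupport J = Set.Icc (-δ) δ) (hJint : (∫ y, J y) = 1) :
    ∀ φ : ℝ → ℝ, Continuous φ →
      ContDiff ℝ 2 (convol (kappa J δ) φ) ∧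
      ∀ x : ℝ, deriv (deriv (convol (kappa J δ) φ)) x = convol J φ x - φ x :=
  stmt16_general J δ hδ hJC1 hJeven hJsupp hJint
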